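/- (Product representation) For every distributive bilattice A there is a bounded distributive lattice L such that A is isomorphic to L ⊙ L, where L ⊙ L is the bilattice on L × L with (a₁,a₂) ∨_t (b₁,b₂) = (a₁∨b₁, a₂∧b₂), (a₁,a₂) ∧_t (b₁,b₂) = (a₁∧b₁, a₂∨b₂), ¬(a,b) = (b,a), 0_t = (0,1), 1_t = (1,0), 0_k = (0,0), 1_k = (1,1). Moreover L may be taken to be the interval [0_k, 1_t] of the t-lattice of A. -/

import Mathlib

/-!
The isomorphism is `a ↦ (a ⊓_k 1_t, ¬a ⊓_k 1_t)`. Since `⊓_k` distributes over `∨_t` and `∧_t`,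
`a ↦ a ⊓_k 1_t` is a t-lattice homomorphism, and by the 90° Lemma it equals `(a ∧_t 1_k) ∨_t 0_k`,
so it retracts `A` onto `[0_k, 1_t]`. As `1_t ⊔_k 0_t = 1_k`, every `a` splits as
`(a ⊓_k 1_t) ⊔_k (a ⊓_k 0_t)`, and the second part is `¬(¬a ⊓_k 1_t)`; conversely a pair
`(x, y)` of the interval comes from `x ⊔_k ¬y`, because `¬y ⊓_k 1_t = 0_k`.
-/

/-- An unbounded distributive pre-bilattice: two lattice structures
`(∨_t, ∧_t)` and `(∨_k, ∧_k)` on the same carrier, with each of the four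
operations distributing over each of the other three. -/
structure DPBU (A : Type*) where
  tsup : A → A → A
  tinf : A → A → A
  ksup : A → A → A
  kinf : A → A → A
  tsup_comm : ∀ a b, tsup a b = tsup b a
  tinf_comm : ∀ a b, tinf a b = tinf b a
  tsup_assoc : ∀ a b c, tsup (tsup a b) c = tsup a (tsup b c)
  tinf_assoc : ∀ a b c, tinf (tinf a b) c = tinf a (tinf b c)
  tsup_absorb : ∀ a b, tsup a (tinf a b) = a
  tinf_absorb : ∀ a b, tinf a (tsup a b) = a
  ksup_comm : ∀ a b, ksup a b = ksup b a
  kinf_comm : ∀ a b, kinf a b = kinf b a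
  ksup_assoc : ∀ a b c, ksup (ksup a b) c = ksup a (ksup b c)
  kinf_assoc : ∀ a b c, kinf (kinf a b) c = kinf a (kinf b c)
  ksup_absorb : ∀ a b, ksup a (kinf a b) = a
  kinf_absorb : ∀ a b, kinf a (ksup a b) = a
  tsup_tinf : ∀ a b c, tsup a (tinf b c) = tinf (tsup a b) (tsup a c)
  tsup_ksup : ∀ a b c, tsup a (ksup b c) = ksup (tsup a b) (tsup a c)
  tsup_kinf : ∀ a b c, tsup a (kinf b c) = kinf (tsup a b) (tsup a c)
  tinf_tsup : ∀ a b c, tinf a (tsup b c) = tsup (tinf a b) (tinf a c)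
  tinf_ksup : ∀ a b c, tinf a (ksup b c) = ksup (tinf a b) (tinf a c)
  tinf_kinf : ∀ a b c, tinf a (kinf b c) = kinf (tinf a b) (tinf a c)
  ksup_tsup : ∀ a b c, ksup a (tsup b c) = tsup (ksup a b) (ksup a c)
  ksup_tinf : ∀ a b c, ksup a (tinf b c) = tinf (ksup a b) (ksup a c)
  ksup_kinf : ∀ a b c, ksup a (kinf b c) = kinf (ksup a b) (ksup a c)
  kinf_tsup : ∀ a b c, kinf a (tsup b c) = tsup (kinf a b) (kinf a c)
  kinf_tinf : ∀ a b c, kinf a (tinf b c) = tinf (kinf a b) (kinf a c)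
  kinf_ksup : ∀ a b c, kinf a (ksup b c) = ksup (kinf a b) (kinf a c)

/-- The truth order `≤_t`. -/
def DPBU.tle {A : Type*} (B : DPBU A) (a b : A) : Prop := B.tsup a b = b

/-- The knowledge order `≤_k`. -/
def DPBU.kle {A : Type*} (B : DPBU A) (a b : A) : Prop := B.ksup a b = b

/-- A (bounded) distributive bilattice: bounded distributive t-lattice,
k-bounds `0_k`, `1_k`, k-operations given by the 90° Lemma formulas, and an
involutory negation which is a dual endomorphism of the bounded t-lattice
and an endomorphism of the bounded k-lattice. -/
structure DB (A : Type*) extends DPBU A where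
  neg : A → A
  tbot : A
  ttop : A
  kbot : A
  ktop : A
  tbot_le : ∀ a, tsup tbot a = a
  le_ttop : ∀ a, tsup a ttop = ttop
  kbot_le : ∀ a, ksup kbot a = a
  le_ktop : ∀ a, ksup a ktop = ktop
  ksup_def : ∀ a b, ksup a b = tsup (tinf (tinf a b) kbot) (tinf (tsup a b) ktop)
  kinf_def : ∀ a b, kinf a b = tsup (tinf (tinf a b) ktop) (tinf (tsup a b) kbot)
  neg_neg : ∀ a, neg (neg a) = a
  neg_tsup : ∀ a b, neg (tsup a b) = tinf (neg a) (neg b)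
  neg_tinf : ∀ a b, neg (tinf a b) = tsup (neg a) (neg b)
  neg_ksup : ∀ a b, neg (ksup a b) = ksup (neg a) (neg b)
  neg_kinf : ∀ a b, neg (kinf a b) = kinf (neg a) (neg b)
  neg_tbot : neg tbot = ttop
  neg_ttop : neg ttop = tbot
  neg_kbot : neg kbot = kbot
  neg_ktop : neg ktop = ktop

namespace DPBU

variable {A : Type*} (B : DPBU A)

theorem tsup_idem (a : A) : B.tsup a a = a := by
  have h := B.tsup_absorb a (B.tsup a a)
  rwa [B.tinf_absorb] at h

theorem tinf_idem (a : A) : B.tinf a a = a := by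
  have h := B.tinf_absorb a (B.tinf a a)
  rwa [B.tsup_absorb] at h

theorem ksup_idem (a : A) : B.ksup a a = a := by
  have h := B.ksup_absorb a (B.ksup a a)
  rwa [B.kinf_absorb] at h

theorem kinf_idem (a : A) : B.kinf a a = a := by
  have h := B.kinf_absorb a (B.kinf a a)
  rwa [B.ksup_absorb] at h

theorem tle_tsup_right (a b : A) : B.tle b (B.tsup a b) := by
  rw [DPBU.tle, B.tsup_comm a b, ← B.tsup_assoc, B.tsup_idem]

theorem kinf_tsup_right (a b c : A) :
    B.kinf (B.tsup a b) c = B.tsup (B.kinf a c) (B.kinf b c) := by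
  rw [B.kinf_comm, B.kinf_tsup, B.kinf_comm c, B.kinf_comm c]

theorem kinf_tinf_right (a b c : A) :
    B.kinf (B.tinf a b) c = B.tinf (B.kinf a c) (B.kinf b c) := by
  rw [B.kinf_comm, B.kinf_tinf, B.kinf_comm c, B.kinf_comm c]

theorem kinf_ksup_right (a b c : A) :
    B.kinf (B.ksup a b) c = B.ksup (B.kinf a c) (B.kinf b c) := by
  rw [B.kinf_comm, B.kinf_ksup, B.kinf_comm c, B.kinf_comm c]

end DPBU

namespace DB

variable {A : Type*} (B : DB A)

theorem tbot_tinf (a : A) : B.tinf B.tbot a = B.tbot := by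
  have h := B.tinf_absorb B.tbot a
  rwa [B.tbot_le] at h

theorem tinf_ttop (a : A) : B.tinf a B.ttop = a := by
  have h := B.tinf_absorb a B.ttop
  rwa [B.le_ttop] at h

theorem ttop_tinf (a : A) : B.tinf B.ttop a = a := by
  rw [B.tinf_comm, B.tinf_ttop]

theorem ksup_kbot (a : A) : B.ksup a B.kbot = a := by
  rw [B.ksup_comm, B.kbot_le]

theorem kbot_kinf (a : A) : B.kinf B.kbot a = B.kbot := by
  have h := B.kinf_absorb B.kbot a
  rwa [B.kbot_le] at h

theorem kinf_ktop (a : A) : B.kinf a B.ktop = a := by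
  have h := B.kinf_absorb a B.ktop
  rwa [B.le_ktop] at h

theorem tsup_kbot_ktop : B.tsup B.kbot B.ktop = B.ttop := by
  have h := B.ksup_def B.ttop B.ttop
  rwa [B.ksup_idem, B.tinf_idem, B.tsup_idem, B.ttop_tinf, B.ttop_tinf, eq_comm] at h

theorem tinf_kbot_ktop : B.tinf B.kbot B.ktop = B.tbot := by
  rw [← B.neg_neg (B.tinf _ _), B.neg_tinf, B.neg_kbot, B.neg_ktop, B.tsup_kbot_ktop,
    B.neg_ttop]

theorem ksup_ttop_tbot : B.ksup B.ttop B.tbot = B.ktop := by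
  rw [B.ksup_def, B.ttop_tinf, B.tbot_tinf, B.tsup_comm B.ttop, B.tbot_le B.ttop, B.ttop_tinf,
    B.tbot_le]

theorem kinf_ttop_eq (a : A) : B.kinf a B.ttop = B.tsup (B.tinf a B.ktop) B.kbot := by
  rw [B.kinf_def, B.tinf_ttop, B.le_ttop, B.ttop_tinf]

theorem kinf_tbot_ttop : B.kinf B.tbot B.ttop = B.kbot := by
  rw [B.kinf_ttop_eq, B.tbot_tinf, B.tbot_le]

theorem kinf_ktop_ttop : B.kinf B.ktop B.ttop = B.ttop := by
  rw [B.kinf_ttop_eq, B.tinf_idem, B.tsup_comm, B.tsup_kbot_ktop]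

theorem tle_kinf_ttop (a : A) : B.tle B.kbot (B.kinf a B.ttop) := by
  rw [B.kinf_ttop_eq]
  exact B.tle_tsup_right _ _

theorem kinf_ttop_of_tle {x : A} (hx : B.tle B.kbot x) : B.kinf x B.ttop = x := by
  rw [B.kinf_ttop_eq, B.tsup_comm, B.tsup_tinf, hx, B.tsup_kbot_ktop, B.tinf_ttop]

theorem kinf_neg_ttop_of_tle {y : A} (hy : B.tle B.kbot y) :
    B.kinf (B.neg y) B.ttop = B.kbot := by
  -- `0_k ≤_t y` negates to `¬y ≤_t 0_k`, so `¬y ∧_t 1_k ≤_t 0_k ∧_t 1_k = 0_t`.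
  have hy' : B.tinf B.kbot (B.neg y) = B.neg y := by
    rw [← B.neg_kbot, ← B.neg_tsup, hy]
  rw [B.kinf_ttop_eq, ← hy', B.tinf_comm B.kbot, B.tinf_assoc, B.tinf_kbot_ktop,
    B.tinf_comm, B.tbot_tinf, B.tbot_le]

theorem kinf_ksup_neg_ttop {x y : A} (hx : B.tle B.kbot x) (hy : B.tle B.kbot y) :
    B.kinf (B.ksup x (B.neg y)) B.ttop = x := by
  rw [B.kinf_ksup_right, B.kinf_ttop_of_tle hx, B.kinf_neg_ttop_of_tle hy, B.ksup_kbot]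

def toPair (a : A) : A × A := (B.kinf a B.ttop, B.kinf (B.neg a) B.ttop)

def ofPair (p : A × A) : A := B.ksup p.1 (B.neg p.2)

theorem ofPair_toPair (a : A) : B.ofPair (B.toPair a) = a := by
  rw [ofPair, toPair, B.neg_kinf, B.neg_neg, B.neg_ttop, ← B.kinf_ksup, B.ksup_ttop_tbot,
    B.kinf_ktop]

theorem toPair_injective : Function.Injective B.toPair :=
  Function.LeftInverse.injective B.ofPair_toPair

theorem toPair_ofPair {p : A × A} (h₁ : B.tle B.kbot p.1) (h₂ : B.tle B.kbot p.2) :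
    B.toPair (B.ofPair p) = p := by
  refine Prod.ext (B.kinf_ksup_neg_ttop h₁ h₂) ?_
  show B.kinf (B.neg (B.ksup p.1 (B.neg p.2))) B.ttop = p.2
  rw [B.neg_ksup, B.neg_neg, B.ksup_comm]
  exact B.kinf_ksup_neg_ttop h₂ h₁

theorem range_toPair :
    Set.range B.toPair = {p : A × A |
      (B.tle B.kbot p.1 ∧ B.tle p.1 B.ttop) ∧ (B.tle B.kbot p.2 ∧ B.tle p.2 B.ttop)} := by
  ext p
  constructor
  · rintro ⟨a, rfl⟩
    exact ⟨⟨B.tle_kinf_ttop a, B.le_ttop _⟩, ⟨B.tle_kinf_ttop (B.neg a), B.le_ttop _⟩⟩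
  · rintro ⟨⟨h₁, -⟩, ⟨h₂, -⟩⟩
    exact ⟨B.ofPair p, B.toPair_ofPair h₁ h₂⟩

theorem toPair_tsup (a b : A) :
    B.toPair (B.tsup a b) =
      (B.tsup (B.toPair a).1 (B.toPair b).1, B.tinf (B.toPair a).2 (B.toPair b).2) := by
  rw [toPair, B.neg_tsup, B.kinf_tsup_right, B.kinf_tinf_right]
  rfl

theorem toPair_tinf (a b : A) :
    B.toPair (B.tinf a b) =
      (B.tinf (B.toPair a).1 (B.toPair b).1, B.tsup (B.toPair a).2 (B.toPair b).2) := by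
  rw [toPair, B.neg_tinf, B.kinf_tinf_right, B.kinf_tsup_right]
  rfl

theorem toPair_neg (a : A) : B.toPair (B.neg a) = ((B.toPair a).2, (B.toPair a).1) := by
  rw [toPair, B.neg_neg]
  rfl

theorem toPair_tbot : B.toPair B.tbot = (B.kbot, B.ttop) := by
  rw [toPair, B.neg_tbot, B.kinf_tbot_ttop, B.kinf_idem]

theorem toPair_ttop : B.toPair B.ttop = (B.ttop, B.kbot) := by
  rw [toPair, B.neg_ttop, B.kinf_tbot_ttop, B.kinf_idem]

theorem toPair_kbot : B.toPair B.kbot = (B.kbot, B.kbot) := by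
  rw [toPair, B.neg_kbot, B.kbot_kinf]

theorem toPair_ktop : B.toPair B.ktop = (B.ttop, B.ttop) := by
  rw [toPair, B.neg_ktop, B.kinf_ktop_ttop]

end DB

/-- The Product Representation Theorem for distributive bilattices: every
distributive bilattice `A` is isomorphic to `L ⊙ L`, where `L` may be taken to
be the interval `[0_k, 1_t]` of the t-lattice of `A`.  We express the
isomorphism as an injection `f : A → A × A` whose range is `[0_k,1_t] × [0_k,1_t]`
and which transforms the operations of `A` into the `⊙` operations. -/
theorem stmt_17 {A : Type*} (B : DB A) :
    ∃ f : A → A × A,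
      Function.Injective f ∧
      Set.range f = {p : A × A |
        (B.tle B.kbot p.1 ∧ B.tle p.1 B.ttop) ∧
        (B.tle B.kbot p.2 ∧ B.tle p.2 B.ttop)} ∧
      (∀ a b, f (B.tsup a b) = (B.tsup (f a).1 (f b).1, B.tinf (f a).2 (f b).2)) ∧
      (∀ a b, f (B.tinf a b) = (B.tinf (f a).1 (f b).1, B.tsup (f a).2 (f b).2)) ∧
      (∀ a, f (B.neg a) = ((f a).2, (f a).1)) ∧
      f B.tbot = (B.kbot, B.ttop) ∧
      f B.ttop = (B.ttop, B.kbot) ∧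
      f B.kbot = (B.kbot, B.kbot) ∧
      f B.ktop = (B.ttop, B.ttop) :=
  ⟨B.toPair, B.toPair_injective, B.range_toPair, B.toPair_tsup, B.toPair_tinf, B.toPair_neg,
    B.toPair_tbot, B.toPair_ttop, B.toPair_kbot, B.toPair_ktop⟩
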